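/- arXiv:2103.07705 — 4 statements merged into one kernel-verified Lean document; each statement's English description precedes it below -/
import Mathlib

section
/- If G is a unicyclic graph with n ≥ 4 vertices and f : [1,∞) → (0,∞) is a function such that log f is convex, then f(2)^n ≤ Π_{u ∈ V(G)} f(d_u) ≤ f(n-1)·f(2)^2·f(1)^{n-3}. -/
/-!
In a unicyclic graph on `n` vertices all degrees lie in `[1, n - 1]`, they average to `2`, and
the (at least three) vertices of the cycle have degree `≥ 2`. With `g = log ∘ f` convex, the lower
bound is Jensen's inequality at the mean degree `2`. For the upper bound, bound `g` on `[2, n - 1]`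
by its chord `L`, and write `g 1 = L 1 + δ`. As `L` is affine and the degrees average to `2`,
`∑ g(d_u) ≤ n · g 2 + (number of leaves) · δ`; convexity on `[1, n - 1]` gives `δ ≥ 0`, so the
bound is largest for the maximal number `n - 3` of leaves, where it is attained by `U_n^3`.
-/

open Finset SimpleGraph

/-- A unicyclic graph: connected with as many edges as vertices. -/
def IsUnicyclic {n : ℕ} (G : SimpleGraph (Fin n)) [DecidableRel G.Adj] : Prop :=
  G.Connected ∧ G.edgeFinset.card = n

/-- The graph `U_n^3`: a triangle on vertices 0,1,2 with n-3 pendant edges attached to 0. -/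
def unicyclicStar (n : ℕ) : SimpleGraph (Fin n) :=
  SimpleGraph.fromRel (fun i j => i.val = 0 ∨ (i.val = 1 ∧ j.val = 2))

namespace SimpleGraph

variable {V : Type*} {G : SimpleGraph V}

theorem Walk.IsCycle.two_le_degree [Fintype V] [DecidableRel G.Adj] {v x : V} {c : G.Walk v v}
    (hc : c.IsCycle) (hx : x ∈ c.support) : 2 ≤ G.degree x := by
  rw [← hc.ncard_neighborSet_toSubgraph_eq_two hx, ← card_neighborSet_eq_degree,
    ← Nat.card_eq_fintype_card, Nat.card_coe_set_eq]
  exact Set.ncard_le_ncard (c.toSubgraph.neighborSet_subset x)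

theorem Connected.three_le_card_two_le_degree [Fintype V] [DecidableRel G.Adj]
    (hG : G.Connected) (hcard : #G.edgeFinset = Fintype.card V) :
    3 ≤ #{v | 2 ≤ G.degree v} := by
  have hcyclic : ¬ G.IsAcyclic := fun hacyc => by
    have := (isTree_iff_connected_and_card.1 ⟨hG, hacyc⟩).2
    rw [Nat.card_eq_fintype_card, Nat.card_eq_fintype_card, ← edgeFinset_card, hcard] at this
    omega
  obtain ⟨v, c, hc⟩ : ∃ v, ∃ c : G.Walk v v, c.IsCycle := by simpa [IsAcyclic] using hcyclic
  classical
  calc 3 ≤ c.length := hc.three_le_length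
    _ = #c.support.tail.toFinset := by
      rw [List.toFinset_card_of_nodup hc.support_nodup, List.length_tail, Walk.length_support]
      rfl
    _ ≤ #{v | 2 ≤ G.degree v} := card_le_card fun x hx => by
      simpa using hc.two_le_degree (List.mem_of_mem_tail (List.mem_toFinset.1 hx))

end SimpleGraph

section Convex

variable {s : Set ℝ} {g : ℝ → ℝ}

theorem ConvexOn.mul_le_of_mem_Icc (hg : ConvexOn ℝ s g) {x y z : ℝ} (hx : x ∈ s) (hz : z ∈ s)
    (hxy : x ≤ y) (hyz : y ≤ z) : (z - x) * g y ≤ (z - y) * g x + (y - x) * g z := by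
  rcases hxy.eq_or_lt with rfl | hxy
  · simp
  rcases hyz.eq_or_lt with rfl | hyz
  · simp
  exact hg.secant_mono_aux1 hx hz hxy hyz

theorem ConvexOn.card_mul_map_le_sum_of_sum_eq {ι : Type*} (hg : ConvexOn ℝ s g) {t : Finset ι}
    {p : ι → ℝ} (hp : ∀ i ∈ t, p i ∈ s) {m : ℝ} (hsum : ∑ i ∈ t, p i = #t * m) :
    #t * g m ≤ ∑ i ∈ t, g (p i) := by
  rcases t.eq_empty_or_nonempty with rfl | ht
  · simp
  have hcard : (0 : ℝ) < #t := by exact_mod_cast ht.card_pos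
  have hjensen := hg.map_sum_le (w := fun _ => (#t : ℝ)⁻¹) (fun _ _ => by positivity)
    (by simp [hcard.ne']) hp
  simp only [smul_eq_mul, ← mul_sum, hsum, inv_mul_cancel_left₀ hcard.ne'] at hjensen
  rwa [le_inv_mul_iff₀ hcard] at hjensen

theorem ConvexOn.sum_map_le_of_sum_eq_two_mul {ι : Type*} [Fintype ι] {n : ℕ} (hn : 4 ≤ n)
    (hι : Fintype.card ι = n) (hg : ConvexOn ℝ (Set.Ici 1) g) {d : ι → ℕ}
    (hd_pos : ∀ i, 1 ≤ d i) (hd_lt : ∀ i, d i < n) (hsum : ∑ i, d i = 2 * n)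
    (hbranch : 3 ≤ #{i | 2 ≤ d i}) :
    ∑ i, g (d i) ≤ g (n - 1) + 2 * g 2 + (n - 3) * g 1 := by
  have hn' : (4 : ℝ) ≤ n := by exact_mod_cast hn
  have h1 : (1 : ℝ) ∈ Set.Ici 1 := Set.self_mem_Ici
  have h2 : (2 : ℝ) ∈ Set.Ici 1 := by norm_num
  have hn1 : (n - 1 : ℝ) ∈ Set.Ici 1 := by simp only [Set.mem_Ici]; linarith
  -- `Δ` is the gap at `1` between `g` and the chord of `g` over `[2, n - 1]`, scaled by `n - 3`.
  set Δ := (n - 3) * (g 1 - g 2) + (g (n - 1) - g 2) with hΔ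
  have hΔ_nonneg : 0 ≤ Δ := by
    have := hg.mul_le_of_mem_Icc h1 hn1 (by norm_num : (1 : ℝ) ≤ 2) (by linarith)
    linarith
  have hpointwise : ∀ k : ℕ, 1 ≤ k → k < n →
      (n - 3) * g k ≤ (n - 3) * g 2 + (k - 2) * (g (n - 1) - g 2) + if 2 ≤ k then 0 else Δ := by
    intro k hk1 hkn
    by_cases hk2 : 2 ≤ k
    · have hk : (2 : ℝ) ≤ k := by exact_mod_cast hk2
      have hk' : (k : ℝ) ≤ n - 1 := by
        rw [le_sub_iff_add_le]; exact_mod_cast hkn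
      have := hg.mul_le_of_mem_Icc h2 hn1 hk hk'
      rw [if_pos hk2]
      linarith
    · obtain rfl : k = 1 := by omega
      simp only [if_neg hk2, Nat.cast_one, hΔ]
      linarith
  have hleaves : (#{i | ¬ 2 ≤ d i} : ℝ) ≤ n - 3 := by
    have := card_filter_add_card_filter_not (s := univ) (fun i => 2 ≤ d i)
    rw [card_univ, hι] at this
    rw [le_sub_iff_add_le]
    exact_mod_cast (by omega : #{i | ¬ 2 ≤ d i} + 3 ≤ n)
  have hsum' : ∑ i, (d i : ℝ) = 2 * n := by exact_mod_cast hsum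
  have hscaled : (n - 3) * ∑ i, g (d i) ≤ (n - 3) * (g (n - 1) + 2 * g 2 + (n - 3) * g 1) :=
    calc (n - 3) * ∑ i, g (d i)
        ≤ ∑ i, ((n - 3) * g 2 + (d i - 2) * (g (n - 1) - g 2) + if 2 ≤ d i then 0 else Δ) := by
          rw [mul_sum]; exact sum_le_sum fun i _ => hpointwise _ (hd_pos i) (hd_lt i)
      _ = n * (n - 3) * g 2 + #{i | ¬ 2 ≤ d i} * Δ := by
          simp only [sum_add_distrib, ← sum_mul, sum_sub_distrib, hsum', sum_ite, sum_const_zero,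
            sum_const, card_univ, hι, nsmul_eq_mul]
          ring
      _ ≤ n * (n - 3) * g 2 + (n - 3) * Δ := by gcongr
      _ = (n - 3) * (g (n - 1) + 2 * g 2 + (n - 3) * g 1) := by ring
  exact le_of_mul_le_mul_left hscaled (by linarith)

end Convex

theorem stmt4 {n : ℕ} (hn : 4 ≤ n) (G : SimpleGraph (Fin n)) [DecidableRel G.Adj]
    (hG : IsUnicyclic G) (f : ℝ → ℝ) (hpos : ∀ x : ℝ, 1 ≤ x → 0 < f x)
    (hconv : ConvexOn ℝ (Set.Ici 1) (fun x => Real.log (f x))) :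
    f 2 ^ n ≤ ∏ u : Fin n, f (G.degree u) ∧
      ∏ u : Fin n, f (G.degree u) ≤ f ((n : ℝ) - 1) * f 2 ^ 2 * f 1 ^ (n - 3) := by
  obtain ⟨hconn, hcard⟩ := hG
  have : Nontrivial (Fin n) := Fin.nontrivial_iff_two_le.2 (by omega)
  have hdeg_pos : ∀ u, 1 ≤ G.degree u := fun u => hconn.preconnected.degree_pos_of_nontrivial u
  have hdeg_lt : ∀ u, G.degree u < n := fun u => by simpa using G.degree_lt_card_verts u
  have hsum : ∑ u, G.degree u = 2 * n := by rw [G.sum_degrees_eq_twice_card_edges, hcard]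
  have hn1 : (1 : ℝ) ≤ n - 1 := by
    have : (4 : ℝ) ≤ n := by exact_mod_cast hn
    linarith
  have hexp : ∀ x, 1 ≤ x → f x = Real.exp (Real.log (f x)) :=
    fun x hx => (Real.exp_log (hpos x hx)).symm
  have hprod : ∏ u, f (G.degree u) = Real.exp (∑ u, Real.log (f (G.degree u))) := by
    rw [Real.exp_sum]
    exact prod_congr rfl fun u _ => hexp _ (by exact_mod_cast hdeg_pos u)
  rw [hprod, hexp 1 le_rfl, hexp 2 one_le_two, hexp _ hn1, ← Real.exp_nat_mul, ← Real.exp_nat_mul,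
    ← Real.exp_nat_mul, ← Real.exp_add, ← Real.exp_add, Real.exp_le_exp, Real.exp_le_exp]
  constructor
  · simpa using hconv.card_mul_map_le_sum_of_sum_eq (t := univ) (m := 2)
      (fun u _ => (by exact_mod_cast hdeg_pos u : (1 : ℝ) ≤ G.degree u))
      (by rw [card_univ, Fintype.card_fin, mul_comm]; exact_mod_cast hsum)
  · rw [Nat.cast_sub (by omega)]
    push_cast
    linarith [hconv.sum_map_le_of_sum_eq_two_mul hn (Fintype.card_fin n) hdeg_pos hdeg_lt hsum
      (hconn.three_le_card_two_le_degree (by simpa using hcard))]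
end

section
/- If G is a unicyclic graph with n ≥ 4 vertices and f : [1,∞) → (0,∞) is a function such that log f is concave, then f(n-1)·f(2)^2·f(1)^{n-3} ≤ Π_{u ∈ V(G)} f(d_u) ≤ f(2)^n. -/
open Finset SimpleGraph

/-!
With `g = log ∘ f` the claim is about `∑ u, g (d u)`, where the degrees satisfy `∑ u, d u = 2n`.
The upper bound is Jensen's inequality at the average degree `2`. For the lower bound let `b` be
the slope of `g` between `2` and `n - 1`. Concavity gives `b ≤ g 2 - g 1` and
`g k ≥ g 2 + (k - 2) b` for `2 ≤ k ≤ n - 1`, hence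
`∑ u, g (d u) ≥ n g 1 + n b + K (g 2 - g 1 - b)`, where `K` is the number of vertices of degree at
least `2`. Since `K ≥ 3`, the right side is at least its value `g (n - 1) + 2 g 2 + (n - 3) g 1`
at `K = 3`, attained by the degree sequence `(n - 1, 2, 2, 1, …, 1)` of `U_n^3`.
-/

theorem ConcaveOn.secant_anti {𝕜 : Type*} [Field 𝕜] [LinearOrder 𝕜] [IsStrictOrderedRing 𝕜]
    {s : Set 𝕜} {f : 𝕜 → 𝕜} (hf : ConcaveOn 𝕜 s f) {a x y : 𝕜} (ha : a ∈ s) (hx : x ∈ s)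
    (hy : y ∈ s) (hxa : x ≠ a) (hya : y ≠ a) (hxy : x ≤ y) :
    (f y - f a) / (y - a) ≤ (f x - f a) / (x - a) := by
  have h := hf.neg.secant_mono ha hx hy hxa hya hxy
  simp only [Pi.neg_apply, neg_sub_neg] at h
  rwa [← neg_sub (f x), ← neg_sub (f y), neg_div, neg_div, neg_le_neg_iff] at h

theorem ConcaveOn.sum_le_card_mul_of_sum_eq {ι : Type*} {s : Set ℝ} {g : ℝ → ℝ}
    (hg : ConcaveOn ℝ s g) {t : Finset ι} (ht : t.Nonempty) {p : ι → ℝ}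
    (hp : ∀ i ∈ t, p i ∈ s) {c : ℝ} (hsum : ∑ i ∈ t, p i = #t * c) :
    ∑ i ∈ t, g (p i) ≤ #t * g c := by
  have hcard : (0 : ℝ) < #t := by exact_mod_cast ht.card_pos
  have h := hg.le_map_sum (w := fun _ => (#t : ℝ)⁻¹) (fun _ _ => by positivity)
    (by simp [hcard.ne']) hp
  simp only [smul_eq_mul, ← Finset.mul_sum, hsum, inv_mul_cancel_left₀ hcard.ne'] at h
  rwa [inv_mul_le_iff₀ hcard] at h

theorem ConcaveOn.le_sum_of_three_le_card_two_le {ι : Type*} [Fintype ι] {g : ℝ → ℝ}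
    (hg : ConcaveOn ℝ (Set.Ici 1) g) {m : ℝ} (hm : 2 < m) (d : ι → ℕ) (hd1 : ∀ i, 1 ≤ d i)
    (hdm : ∀ i, (d i : ℝ) ≤ m) (hsum : ∑ i, (d i : ℝ) = Fintype.card ι + m + 1)
    (hK : 3 ≤ #{i | 2 ≤ d i}) :
    g m + 2 * g 2 + (Fintype.card ι - 3) * g 1 ≤ ∑ i, g (d i) := by
  set b := (g m - g 2) / (m - 2) with hb
  have hm1 : m ∈ Set.Ici (1 : ℝ) := Set.mem_Ici.mpr (by linarith)
  have h2 : (2 : ℝ) ∈ Set.Ici 1 := Set.mem_Ici.mpr one_le_two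
  have hba : b ≤ g 2 - g 1 := by
    have h := hg.secant_anti (x := 1) h2 (Set.mem_Ici.mpr le_rfl) hm1 (by norm_num) hm.ne'
      (by linarith)
    rwa [show (g 1 - g 2) / (1 - 2 : ℝ) = g 2 - g 1 by ring] at h
  have hchord : ∀ t : ℝ, 2 ≤ t → t ≤ m → g 2 + (t - 2) * b ≤ g t := by
    intro t ht htm
    rcases ht.eq_or_lt with rfl | ht
    · simp
    have h := hg.secant_anti h2 (Set.mem_Ici.mpr (by linarith)) hm1 ht.ne' hm.ne' htm
    rw [le_div_iff₀ (by linarith)] at h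
    linarith
  have hpoint : ∀ i, g 1 + (d i - 1) * b + (if 2 ≤ d i then 1 else 0) * (g 2 - g 1 - b)
      ≤ g (d i) := by
    intro i
    by_cases h : 2 ≤ d i
    · have := hchord (d i) (by exact_mod_cast h) (hdm i)
      rw [if_pos h]
      linarith
    · rw [show d i = 1 by have := hd1 i; omega]
      simp
  have hgm : g m = g 2 + (m - 2) * b := by
    rw [hb, mul_div_cancel₀ _ (sub_ne_zero.mpr hm.ne')]
    ring
  have hKR : (3 : ℝ) ≤ #{i | 2 ≤ d i} := by exact_mod_cast hK
  calc g m + 2 * g 2 + (Fintype.card ι - 3) * g 1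
      = Fintype.card ι * g 1 + (m + 1) * b + 3 * (g 2 - g 1 - b) := by
        rw [hgm]; ring
    _ ≤ Fintype.card ι * g 1 + (m + 1) * b + #{i | 2 ≤ d i} * (g 2 - g 1 - b) := by
        have : 0 ≤ g 2 - g 1 - b := by linarith
        gcongr
    _ = ∑ i, (g 1 + (d i - 1) * b + (if 2 ≤ d i then 1 else 0) * (g 2 - g 1 - b)) := by
        rw [sum_add_distrib, sum_add_distrib, ← sum_mul, ← sum_mul, sum_boole, sum_sub_distrib,
          hsum]
        simp only [sum_const, card_univ, nsmul_eq_mul, mul_one]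
        ring
    _ ≤ ∑ i, g (d i) := sum_le_sum fun i _ => hpoint i

namespace SimpleGraph

variable {V : Type*} [Fintype V] [DecidableEq V] (G : SimpleGraph V) [DecidableRel G.Adj]

theorem degree_add_degree_le_card_edgeFinset_add_one {v w : V} (hvw : v ≠ w) :
    G.degree v + G.degree w ≤ #G.edgeFinset + 1 := by
  rw [← card_incidenceFinset_eq_degree, ← card_incidenceFinset_eq_degree,
    ← card_union_add_card_inter]
  have hunion : G.incidenceFinset v ∪ G.incidenceFinset w ⊆ G.edgeFinset :=
    union_subset (G.incidenceFinset_subset v) (G.incidenceFinset_subset w)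
  have hinter : G.incidenceFinset v ∩ G.incidenceFinset w ⊆ {s(v, w)} := by
    intro e he
    simp only [mem_inter, mem_incidenceFinset] at he
    exact mem_singleton.mpr ((Sym2.mem_and_mem_iff hvw).mp ⟨he.1.2, he.2.2⟩)
  exact add_le_add (card_le_card hunion) ((card_le_card hinter).trans_eq (card_singleton _))

/-- If only `v` and `w` had degree at least `2`, the degree sum would be at most
`(|E| + 1) + (|V| - 2) < 2 |E|`. -/
theorem three_le_card_two_le_degree (hV : 2 ≤ Fintype.card V)
    (hE : #G.edgeFinset = Fintype.card V) : 3 ≤ #{v | 2 ≤ G.degree v} := by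
  by_contra! hK
  obtain ⟨s, hKs, -, hs⟩ := exists_subsuperset_card_eq (subset_univ {v | 2 ≤ G.degree v})
    (by omega : #{v | 2 ≤ G.degree v} ≤ 2) (by simpa using hV)
  obtain ⟨v, w, hvw, rfl⟩ := card_eq_two.mp hs
  have hrest : ∑ x ∈ univ \ {v, w}, G.degree x ≤ #(univ \ {v, w}) • 1 := by
    refine sum_le_card_nsmul _ _ _ fun x hx => ?_
    have hxK : x ∉ ({v | 2 ≤ G.degree v} : Finset V) := fun h => (mem_sdiff.mp hx).2 (hKs h)
    simp only [mem_filter, mem_univ, true_and, not_le] at hxK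
    omega
  have hsplit := sum_sdiff (subset_univ {v, w}) (f := fun x => G.degree x)
  rw [sum_pair hvw, sum_degrees_eq_twice_card_edges, hE] at hsplit
  rw [card_sdiff_of_subset (subset_univ _), card_univ, card_pair hvw, smul_eq_mul, mul_one] at hrest
  have := G.degree_add_degree_le_card_edgeFinset_add_one hvw
  omega

end SimpleGraph

namespace IsUnicyclic

variable {n : ℕ} {G : SimpleGraph (Fin n)} [DecidableRel G.Adj]

theorem one_le_degree (hG : IsUnicyclic G) (hn : 2 ≤ n) (u : Fin n) : 1 ≤ G.degree u :=
  have : Nontrivial (Fin n) := Fin.nontrivial_iff_two_le.mpr hn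
  hG.1.preconnected.degree_pos_of_nontrivial u

theorem sum_degree (hG : IsUnicyclic G) : ∑ u, G.degree u = 2 * n := by
  rw [sum_degrees_eq_twice_card_edges, hG.2]

end IsUnicyclic

theorem stmt5 {n : ℕ} (hn : 4 ≤ n) (G : SimpleGraph (Fin n)) [DecidableRel G.Adj]
    (hG : IsUnicyclic G) (f : ℝ → ℝ) (hpos : ∀ x : ℝ, 1 ≤ x → 0 < f x)
    (hconc : ConcaveOn ℝ (Set.Ici 1) (fun x => Real.log (f x))) :
    f ((n : ℝ) - 1) * f 2 ^ 2 * f 1 ^ (n - 3) ≤ ∏ u : Fin n, f (G.degree u) ∧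
      ∏ u : Fin n, f (G.degree u) ≤ f 2 ^ n := by
  set g : ℝ → ℝ := fun x => Real.log (f x)
  have hexp : ∀ x, 1 ≤ x → Real.exp (g x) = f x := fun x hx => Real.exp_log (hpos x hx)
  have hnR : (4 : ℝ) ≤ n := by exact_mod_cast hn
  have hdeg1 : ∀ u, 1 ≤ G.degree u := hG.one_le_degree (by omega)
  have hdeg1R : ∀ u, (1 : ℝ) ≤ G.degree u := fun u => by exact_mod_cast hdeg1 u
  have hdegn : ∀ u, (G.degree u : ℝ) ≤ n - 1 := fun u => by
    have := G.degree_lt_card_verts u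
    rw [Fintype.card_fin] at this
    rw [le_sub_iff_add_le]
    exact_mod_cast this
  have hsum : ∑ u, (G.degree u : ℝ) = 2 * n := by exact_mod_cast hG.sum_degree
  have hprod : ∏ u, f (G.degree u) = Real.exp (∑ u, g (G.degree u)) := by
    rw [Real.exp_sum]
    exact prod_congr rfl fun u _ => (hexp _ (hdeg1R u)).symm
  rw [hprod]
  constructor
  · have key := hconc.le_sum_of_three_le_card_two_le (m := n - 1) (by linarith)
      (fun u => G.degree u) hdeg1 hdegn (by rw [hsum, Fintype.card_fin]; ring)
      (G.three_le_card_two_le_degree (by simp; omega) (by simpa using hG.2))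
    calc f ((n : ℝ) - 1) * f 2 ^ 2 * f 1 ^ (n - 3)
        = Real.exp (g (n - 1) + (2 : ℕ) * g 2 + (n - 3 : ℕ) * g 1) := by
          rw [Real.exp_add, Real.exp_add, Real.exp_nat_mul, Real.exp_nat_mul, hexp _ (by linarith),
            hexp 2 one_le_two, hexp 1 le_rfl]
      _ ≤ Real.exp (∑ u, g (G.degree u)) := by
          rw [Real.exp_le_exp]
          push_cast [Nat.cast_sub (by omega : 3 ≤ n)]
          simpa using key
  · have jensen := hconc.sum_le_card_mul_of_sum_eq ⟨⟨0, by omega⟩, mem_univ _⟩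
      (fun u _ => hdeg1R u) (c := 2) (by rw [hsum, card_univ, Fintype.card_fin]; ring)
    calc Real.exp (∑ u, g (G.degree u)) ≤ Real.exp (n * g 2) := by simpa using jensen
      _ = f 2 ^ n := by rw [Real.exp_nat_mul, hexp 2 one_le_two]
end

section
/- If G is a unicyclic graph with n ≥ 4 vertices, then 4^n ≤ NK*(G) ≤ 16·(n-1)^{n-1}, where NK*(G) = Π_{u ∈ V(G)} d_u^{d_u}. The lower bound is attained if and only if G = C_n and the upper bound if and only if G = U_n^3. -/
/-!
Only the excess degrees `e v = deg v - 1` matter: for a unicyclic graph on `n` vertices they satisfy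
`∑ e v = n`, `e v ≤ n - 2` and `e u + e v ≤ n - 1`, and `NK* = ∏ (e v + 1) ^ (e v + 1)`.

Lower bound: `(e + 1) ^ (e + 1) ≥ 4 ^ e`, with equality iff `e ≤ 1`, so `NK* ≥ 4 ^ n` with
equality iff `G` is 2-regular, i.e. a Hamiltonian cycle.

Upper bound, by induction on `n`: unless all `e v = 1` there are vertices with `e i = 0` and
`e w ≥ 2`; deleting `i` and lowering `e w` by one keeps the constraints on `n - 1` vertices. By
the strict convexity of `x log x`, `(t + 1) ^ (t + 1) / t ^ t` is strictly increasing, so this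
divides `NK*` by at most `(n - 1) ^ (n - 1) / (n - 2) ^ (n - 2)`, with equality only if
`e w = n - 2`. Hence equality forces a vertex adjacent to all others; with exactly `n` edges the
one remaining edge closes a triangle, giving `U_n^3`.
-/

open Finset SimpleGraph

theorem succ_pow_succ_mul_self_lt (t : ℕ) :
    (t + 1) ^ (t + 1) * (t + 1) ^ (t + 1) < t ^ t * (t + 2) ^ (t + 2) := by
  rcases Nat.eq_zero_or_pos t with rfl | ht
  · norm_num
  have hpos : (0 : ℝ) < t := by exact_mod_cast ht
  have hconv := Real.strictConvexOn_mul_log.2 (Set.mem_Ici.2 hpos.le)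
    (Set.mem_Ici.2 (by positivity : (0 : ℝ) ≤ t + 2)) (by linarith : (t : ℝ) ≠ t + 2)
    (by norm_num : (0 : ℝ) < 1 / 2) (by norm_num : (0 : ℝ) < 1 / 2) (by norm_num)
  have hmid : (1 / 2 : ℝ) * t + 1 / 2 * (t + 2) = t + 1 := by ring
  simp only [smul_eq_mul, hmid] at hconv
  rw [← Nat.cast_lt (α := ℝ), ← Real.log_lt_log_iff (by positivity) (by positivity)]
  push_cast
  rw [Real.log_mul (by positivity) (by positivity), Real.log_mul (by positivity) (by positivity),
    Real.log_pow, Real.log_pow, Real.log_pow]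
  push_cast
  linarith

theorem succ_pow_succ_mul_pow_lt {a b : ℕ} (hab : a < b) :
    (a + 1) ^ (a + 1) * b ^ b < a ^ a * (b + 1) ^ (b + 1) := by
  induction b, hab using Nat.le_induction with
  | base => exact succ_pow_succ_mul_self_lt a
  | succ b _ ih =>
    refine Nat.lt_of_mul_lt_mul_left (a := b ^ b * (b + 1) ^ (b + 1)) ?_
    calc b ^ b * (b + 1) ^ (b + 1) * ((a + 1) ^ (a + 1) * (b + 1) ^ (b + 1))
        = ((a + 1) ^ (a + 1) * b ^ b) * ((b + 1) ^ (b + 1) * (b + 1) ^ (b + 1)) := by ring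
      _ < (a ^ a * (b + 1) ^ (b + 1)) * (b ^ b * (b + 2) ^ (b + 2)) :=
        Nat.mul_lt_mul'' ih (succ_pow_succ_mul_self_lt b)
      _ = b ^ b * (b + 1) ^ (b + 1) * (a ^ a * (b + 1 + 1) ^ (b + 1 + 1)) := by ring

theorem succ_pow_succ_mul_pow_le {a b : ℕ} (hab : a ≤ b) :
    (a + 1) ^ (a + 1) * b ^ b ≤ a ^ a * (b + 1) ^ (b + 1) := by
  rcases hab.eq_or_lt with rfl | hab
  · rw [mul_comm]
  · exact (succ_pow_succ_mul_pow_lt hab).le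

theorem four_pow_le_succ_pow_succ (e : ℕ) : 4 ^ e ≤ (e + 1) ^ (e + 1) := by
  induction e with
  | zero => simp
  | succ e ih =>
    calc 4 ^ (e + 1) = 4 * 4 ^ e := by ring
      _ ≤ (1 + 1) ^ (1 + 1) * (e + 1) ^ (e + 1) := Nat.mul_le_mul (by norm_num) ih
      _ ≤ 1 ^ 1 * (e + 1 + 1) ^ (e + 1 + 1) := succ_pow_succ_mul_pow_le (by omega)
      _ = (e + 1 + 1) ^ (e + 1 + 1) := one_mul _

theorem four_pow_lt_succ_pow_succ {e : ℕ} (he : 2 ≤ e) : 4 ^ e < (e + 1) ^ (e + 1) := by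
  obtain ⟨e, rfl⟩ := Nat.exists_eq_add_of_le' he
  calc 4 ^ (e + 1 + 1) = 4 * 4 ^ (e + 1) := by ring
    _ ≤ (1 + 1) ^ (1 + 1) * (e + 1 + 1) ^ (e + 1 + 1) :=
      Nat.mul_le_mul (by norm_num) (four_pow_le_succ_pow_succ _)
    _ < 1 ^ 1 * (e + 1 + 1 + 1) ^ (e + 1 + 1 + 1) := succ_pow_succ_mul_pow_lt (by omega)
    _ = (e + 1 + 1 + 1) ^ (e + 1 + 1 + 1) := one_mul _

theorem succ_pow_succ_eq_four_pow {e : ℕ} (he : e ≤ 1) : (e + 1) ^ (e + 1) = 4 ^ e := by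
  interval_cases e <;> rfl

section ExcessDegrees

variable {ι : Type*} {S : Finset ι} {e : ι → ℕ}

theorem eq_one_of_sum_eq_card_of_le (hsum : ∑ i ∈ S, e i = #S) (hle : ∀ i ∈ S, e i ≤ 1) :
    ∀ i ∈ S, e i = 1 :=
  (sum_eq_sum_iff_of_le hle).1 (by simpa using hsum)

theorem eq_one_of_sum_eq_card_of_ge (hsum : ∑ i ∈ S, e i = #S) (hge : ∀ i ∈ S, 1 ≤ e i) :
    ∀ i ∈ S, e i = 1 :=
  fun i hi ↦ ((sum_eq_sum_iff_of_le hge).1 (by simpa using hsum.symm) i hi).symm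

theorem four_pow_card_le_prod (hsum : ∑ i ∈ S, e i = #S) :
    4 ^ #S ≤ ∏ i ∈ S, (e i + 1) ^ (e i + 1) := by
  rw [← hsum, ← prod_pow_eq_pow_sum]
  exact prod_le_prod' fun i _ ↦ four_pow_le_succ_pow_succ (e i)

theorem prod_eq_four_pow_card_iff (hsum : ∑ i ∈ S, e i = #S) :
    ∏ i ∈ S, (e i + 1) ^ (e i + 1) = 4 ^ #S ↔ ∀ i ∈ S, e i = 1 := by
  refine ⟨fun h ↦ eq_one_of_sum_eq_card_of_le hsum fun i hi ↦ ?_, fun h ↦ ?_⟩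
  · by_contra! hlt
    rw [← hsum, ← prod_pow_eq_pow_sum] at h
    exact (prod_lt_prod (fun _ _ ↦ by positivity) (fun j _ ↦ four_pow_le_succ_pow_succ (e j))
      ⟨i, hi, four_pow_lt_succ_pow_succ hlt⟩).ne' h
  · rw [prod_congr rfl fun i hi ↦ by rw [h i hi], prod_const]
    norm_num

/-- Constraints on the excess degrees `deg v - 1` of a graph on `S` with `#S` edges and no isolated
vertex: the degree sum is `2 * #S`, degrees are below `#S`, and two vertices share at most one
edge. -/
structure ExcessDegreeBounds (S : Finset ι) (e : ι → ℕ) : Prop where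
  sum_eq : ∑ i ∈ S, e i = #S
  le : ∀ i ∈ S, e i ≤ #S - 2
  add_le : ∀ i ∈ S, ∀ j ∈ S, i ≠ j → e i + e j ≤ #S - 1

variable [DecidableEq ι]

theorem ExcessDegreeBounds.erase_update (h : ExcessDegreeBounds S e) {i w : ι} (hi : i ∈ S)
    (hw : w ∈ S) (hiw : i ≠ w) (hei : e i = 0) (hew : 2 ≤ e w) :
    ExcessDegreeBounds (S.erase i) (Function.update e w (e w - 1)) := by
  have hcard : #(S.erase i) = #S - 1 := card_erase_of_mem hi
  have hw' : w ∈ S.erase i := mem_erase.2 ⟨hiw.symm, hw⟩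
  have htriple : ∀ a ∈ S, ∀ b ∈ S, a ≠ b → a ≠ w → b ≠ w → e a + e b + e w ≤ #S := by
    intro a ha b hb hab haw hbw
    calc e a + e b + e w = ∑ j ∈ {a, b, w}, e j := by
          rw [sum_insert (by simp [hab, haw]), sum_pair hbw, add_assoc]
      _ ≤ ∑ j ∈ S, e j := sum_le_sum_of_subset (by simp [insert_subset_iff, ha, hb, hw])
      _ = #S := h.sum_eq
  constructor
  · rw [sum_update_of_mem hw', sdiff_singleton_eq_erase, hcard]
    have h1 := add_sum_erase S e hi
    have h2 := add_sum_erase (S.erase i) e hw'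
    have := h.sum_eq
    omega
  · intro a ha
    obtain ⟨hai, ha⟩ := mem_erase.1 ha
    rw [hcard, Function.update_apply]
    have := h.le w hw
    split_ifs with haw
    · omega
    · have := h.add_le a ha w hw haw
      omega
  · intro a ha b hb hab
    obtain ⟨hai, ha⟩ := mem_erase.1 ha
    obtain ⟨hbi, hb⟩ := mem_erase.1 hb
    rw [hcard, Function.update_apply, Function.update_apply]
    split_ifs with haw hbw hbw
    · exact absurd (haw.trans hbw.symm) hab
    · have := h.add_le w hw b hb (haw ▸ hab)
      omega
    · have := h.add_le a ha w hw haw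
      omega
    · have := htriple a ha b hb hab haw hbw
      omega

theorem ExcessDegreeBounds.prod_eq_of_eq (h : ExcessDegreeBounds S e) (hS : 3 ≤ #S) {v : ι}
    (hv : v ∈ S) (hev : e v = #S - 2) :
    ∏ i ∈ S, (e i + 1) ^ (e i + 1) = 16 * (#S - 1) ^ (#S - 1) := by
  have hrest : ∀ i ∈ S.erase v, e i ≤ 1 := fun i hi ↦ by
    have := h.add_le i (mem_of_mem_erase hi) v hv (ne_of_mem_erase hi)
    omega
  have hsum : ∑ i ∈ S.erase v, e i = 2 := by
    have := add_sum_erase S e hv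
    have := h.sum_eq
    omega
  rw [← mul_prod_erase S _ hv, prod_congr rfl fun i hi ↦ succ_pow_succ_eq_four_pow (hrest i hi),
    prod_pow_eq_pow_sum, hsum, hev, show #S - 2 + 1 = #S - 1 by omega]
  ring

theorem pow_self_mul_prod_eq_of_erase_update {i w : ι} (hi : i ∈ S) (hw : w ∈ S) (hiw : i ≠ w)
    (hei : e i = 0) (hew : 1 ≤ e w) :
    e w ^ e w * ∏ j ∈ S, (e j + 1) ^ (e j + 1) =
      (e w + 1) ^ (e w + 1) * ∏ j ∈ S.erase i,
        (Function.update e w (e w - 1) j + 1) ^ (Function.update e w (e w - 1) j + 1) := by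
  have hw' : w ∈ S.erase i := mem_erase.2 ⟨hiw.symm, hw⟩
  have hrest : ∏ j ∈ (S.erase i).erase w,
      (Function.update e w (e w - 1) j + 1) ^ (Function.update e w (e w - 1) j + 1) =
        ∏ j ∈ (S.erase i).erase w, (e j + 1) ^ (e j + 1) :=
    prod_congr rfl fun j hj ↦ by rw [Function.update_of_ne (ne_of_mem_erase hj)]
  rw [← mul_prod_erase S _ hi, ← mul_prod_erase _ _ hw', ← mul_prod_erase _ _ hw', hrest, hei,
    Function.update_self, Nat.sub_add_cancel hew]
  ring

theorem ExcessDegreeBounds.prod_le_and_exists_of_eq (h : ExcessDegreeBounds S e) (hS : 3 ≤ #S) :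
    ∏ i ∈ S, (e i + 1) ^ (e i + 1) ≤ 16 * (#S - 1) ^ (#S - 1) ∧
      (∏ i ∈ S, (e i + 1) ^ (e i + 1) = 16 * (#S - 1) ^ (#S - 1) → ∃ i ∈ S, e i = #S - 2) := by
  induction S using strongInduction generalizing e with
  | H S ih =>
  obtain ⟨n, hn⟩ : ∃ n, #S = n + 2 := ⟨#S - 2, by omega⟩
  by_cases hone : ∀ i ∈ S, e i = 1
  · rw [(prod_eq_four_pow_card_iff h.sum_eq).2 hone, hn, show n + 2 - 1 = n + 1 by omega,
      show n + 2 - 2 = n by omega, pow_add]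
    refine ⟨by linarith [four_pow_le_succ_pow_succ n], fun heq ↦ ?_⟩
    obtain ⟨i, hi⟩ : S.Nonempty := card_pos.1 (by omega)
    refine ⟨i, hi, (hone i hi).trans ?_⟩
    by_contra hn1
    linarith [four_pow_lt_succ_pow_succ (show 2 ≤ n by omega)]
  obtain ⟨i, hi, hei⟩ : ∃ i ∈ S, e i = 0 := by
    by_contra! h0
    exact hone (eq_one_of_sum_eq_card_of_ge h.sum_eq fun i hi ↦ Nat.one_le_iff_ne_zero.2 (h0 i hi))
  obtain ⟨w, hw, hew⟩ : ∃ w ∈ S, 2 ≤ e w := by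
    by_contra! h2
    exact hone (eq_one_of_sum_eq_card_of_le h.sum_eq fun i hi ↦ Nat.le_of_lt_succ (h2 i hi))
  have hiw : i ≠ w := by rintro rfl; omega
  have hewn : e w ≤ n := by have := h.le w hw; omega
  have hcard : #(S.erase i) = n + 1 := by rw [card_erase_of_mem hi]; omega
  have hIH := (ih _ (erase_ssubset hi) (h.erase_update hi hw hiw hei hew) (by omega)).1
  rw [hcard, Nat.add_sub_cancel] at hIH
  have hchain : e w ^ e w * ∏ j ∈ S, (e j + 1) ^ (e j + 1) ≤
      16 * ((e w + 1) ^ (e w + 1) * n ^ n) := by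
    rw [pow_self_mul_prod_eq_of_erase_update hi hw hiw hei (by omega), mul_left_comm]
    exact Nat.mul_le_mul_left _ hIH
  rw [hn, show n + 2 - 1 = n + 1 by omega, show n + 2 - 2 = n by omega]
  refine ⟨Nat.le_of_mul_le_mul_left ?_ (by positivity : 0 < e w ^ e w), fun heq ↦ ⟨w, hw, ?_⟩⟩
  · calc _ ≤ _ := hchain
      _ ≤ 16 * (e w ^ e w * (n + 1) ^ (n + 1)) :=
        Nat.mul_le_mul_left _ (succ_pow_succ_mul_pow_le hewn)
      _ = _ := by ring
  · by_contra hne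
    have := succ_pow_succ_mul_pow_lt (lt_of_le_of_ne hewn hne)
    rw [heq] at hchain
    nlinarith

theorem ExcessDegreeBounds.prod_eq_iff (h : ExcessDegreeBounds S e) (hS : 3 ≤ #S) :
    ∏ i ∈ S, (e i + 1) ^ (e i + 1) = 16 * (#S - 1) ^ (#S - 1) ↔ ∃ i ∈ S, e i = #S - 2 :=
  ⟨(h.prod_le_and_exists_of_eq hS).2, fun ⟨_, hv, hev⟩ ↦ h.prod_eq_of_eq hS hv hev⟩

end ExcessDegrees

namespace SimpleGraph

theorem Copy.nonempty_iso_of_bijective {V W : Type*} [Fintype V] [Fintype W] [DecidableEq W]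
    {H : SimpleGraph V} {G : SimpleGraph W} [DecidableRel H.Adj] [DecidableRel G.Adj]
    (f : Copy H G) (hf : Function.Bijective f) (hdeg : ∀ v, G.degree (f v) ≤ H.degree v) :
    Nonempty (H ≃g G) := by
  refine ⟨⟨Equiv.ofBijective f hf, fun {a b} ↦ ⟨fun hab ↦ ?_, f.toHom.map_adj⟩⟩⟩
  have hsub : (H.neighborFinset a).map f.toEmbedding ⊆ G.neighborFinset (f a) := by
    intro x hx
    obtain ⟨y, hy, rfl⟩ := mem_map.1 hx
    simpa [Copy.toEmbedding] using f.toHom.map_adj ((mem_neighborFinset _ _ _).1 hy)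
  have heq := eq_of_subset_of_card_le hsub (by simpa using hdeg a)
  have hb : f b ∈ (H.neighborFinset a).map f.toEmbedding := heq ▸ (mem_neighborFinset _ _ _).2 hab
  simpa [Copy.toEmbedding] using hb

section

variable {V : Type*} [Fintype V] {G : SimpleGraph V} [DecidableRel G.Adj]

theorem Connected.exists_isCycle_length_eq_card (hc : G.Connected)
    (hdeg : ∀ v, G.degree v = 2) :
    ∃ (v : V) (p : G.Walk v v), p.IsCycle ∧ p.length = Fintype.card V := by
  classical
  obtain ⟨v⟩ := hc.nonempty
  have hcyc : G.IsCycles := fun w _ ↦ by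
    rw [Set.ncard_eq_toFinset_card', ← neighborFinset_def, card_neighborFinset_eq_degree, hdeg]
  obtain ⟨p, hp, hverts⟩ := hcyc.exists_cycle_toSubgraph_verts_eq_connectedComponentSupp
    (c := G.connectedComponentMk v) rfl
    (degree_pos_iff_nonempty.1 (by rw [hdeg]; norm_num))
  refine ⟨v, p, hp, Walk.IsHamiltonianCycle.length_eq ⟨hp, hp.isPath_tail.isHamiltonian_iff.2 ?_⟩⟩
  intro w
  have hw : w ∈ p.support := by
    rw [← Walk.mem_verts_toSubgraph, hverts, ConnectedComponent.mem_supp_iff,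
      ConnectedComponent.eq]
    exact hc.preconnected w v
  rw [Walk.support_tail_of_not_nil _ hp.not_nil]
  rcases (Walk.mem_support_iff p).1 hw with rfl | h
  · exact Walk.end_mem_tail_support hp.not_nil
  · exact h

variable [DecidableEq V]

theorem degree_add_degree_le {u v : V} (huv : u ≠ v) :
    G.degree u + G.degree v ≤ #G.edgeFinset + 1 := by
  have hunion : #(G.incidenceFinset u ∪ G.incidenceFinset v) ≤ #G.edgeFinset :=
    card_le_card (union_subset (G.incidenceFinset_subset u) (G.incidenceFinset_subset v))
  have hinter : #(G.incidenceFinset u ∩ G.incidenceFinset v) ≤ #{s(u, v)} := by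
    refine card_le_card fun e he ↦ ?_
    simpa using G.incidenceSet_inter_incidenceSet_subset huv (by simpa using he)
  rw [← card_incidenceFinset_eq_degree, ← card_incidenceFinset_eq_degree,
    ← card_union_add_card_inter]
  simp only [card_singleton] at hinter
  omega

theorem excessDegreeBounds (hpos : ∀ v, 0 < G.degree v)
    (hE : #G.edgeFinset = Fintype.card V) :
    ExcessDegreeBounds univ fun v ↦ G.degree v - 1 where
  sum_eq := by
    rw [sum_tsub_distrib _ fun v _ ↦ hpos v, sum_degrees_eq_twice_card_edges, hE, card_univ]
    simp only [sum_const, card_univ, smul_eq_mul, mul_one]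
    omega
  le v _ := by
    have := G.degree_lt_card_verts v
    rw [card_univ]
    omega
  add_le u _ v _ huv := by
    have := degree_add_degree_le (G := G) huv
    have := hpos u
    have := hpos v
    rw [card_univ]
    omega

theorem exists_adj_iff_of_isUniversal (hE : #G.edgeFinset = Fintype.card V) {v : V}
    (hv : G.IsUniversal v) :
    ∃ x y, x ≠ v ∧ y ≠ v ∧ x ≠ y ∧ ∀ a b,
      G.Adj a b ↔ a ≠ b ∧ (a = v ∨ b = v ∨ (a = x ∧ b = y) ∨ (a = y ∧ b = x)) := by
  have hcard : #{e ∈ G.edgeFinset | v ∉ e} = 1 := by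
    have := card_filter_add_card_filter_not (s := G.edgeFinset) (v ∈ ·)
    rw [← incidenceFinset_eq_filter, card_incidenceFinset_eq_degree,
      (G.degree_eq_card_sub_one v).2 hv, hE] at this
    have := Fintype.card_pos_iff.2 ⟨v⟩
    omega
  obtain ⟨e, he⟩ := card_eq_one.1 hcard
  have hmem : ∀ a b, s(a, b) ∈ ({e} : Finset (Sym2 V)) ↔ G.Adj a b ∧ a ≠ v ∧ b ≠ v := by
    intro a b
    rw [← he]
    simp [eq_comm]
  induction e using Sym2.ind with | _ x y =>
  obtain ⟨hxy, hxv, hyv⟩ := (hmem x y).1 (mem_singleton_self _)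
  refine ⟨x, y, hxv, hyv, G.ne_of_adj hxy, fun a b ↦ ?_⟩
  by_cases hab : a = v ∨ b = v
  · refine ⟨fun h ↦ ⟨G.ne_of_adj h, by tauto⟩, fun ⟨hne, _⟩ ↦ ?_⟩
    rcases hab with rfl | rfl
    · exact hv hne
    · exact (hv hne.symm).symm
  · push Not at hab
    have h := hmem a b
    rw [mem_singleton, Sym2.eq_iff] at h
    exact ⟨fun hadj ↦ ⟨G.ne_of_adj hadj, by tauto⟩, fun ⟨_, hor⟩ ↦ (h.1 (by tauto)).1⟩

end

theorem Connected.nonempty_iso_cycleGraph_iff {n : ℕ} {G : SimpleGraph (Fin n)}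
    [DecidableRel G.Adj] (hn : 3 ≤ n) (hc : G.Connected) :
    Nonempty (G ≃g cycleGraph n) ↔ ∀ v, G.degree v = 2 := by
  obtain ⟨m, rfl⟩ : ∃ m, n = m + 3 := ⟨n - 3, by omega⟩
  refine ⟨fun ⟨e⟩ v ↦ by rw [← e.degree_eq, cycleGraph_degree_three_le], fun hdeg ↦ ?_⟩
  obtain ⟨v, p, hp, hlen⟩ := hc.exists_isCycle_length_eq_card hdeg
  obtain ⟨f⟩ := (cycleGraph_isContained_iff (by omega : 2 < m + 3)).2
    ⟨v, p, hp, by simpa using hlen⟩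
  obtain ⟨e⟩ := f.nonempty_iso_of_bijective (Finite.injective_iff_bijective.1 f.injective)
    fun w ↦ by rw [hdeg, cycleGraph_degree_three_le]
  exact ⟨e.symm⟩

theorem nonempty_iso_unicyclicStar_of_isUniversal {n : ℕ} {G : SimpleGraph (Fin n)}
    [DecidableRel G.Adj] (hn : 3 ≤ n) (hE : #G.edgeFinset = n) {v : Fin n}
    (hv : G.IsUniversal v) : Nonempty (G ≃g unicyclicStar n) := by
  obtain ⟨x, y, hxv, hyv, hxy, hadj⟩ := exists_adj_iff_of_isUniversal (by simpa using hE) hv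
  obtain ⟨σ, hσ⟩ := Equiv.Perm.exists_extending_pair ![v, x, y] (Fin.castLE hn)
    (by
      intro i j
      fin_cases i <;> fin_cases j <;> simp [hxv, hyv, hxy, hxv.symm, hyv.symm, hxy.symm])
    (Fin.castLE_injective hn)
  have hval : ∀ a (k : Fin 3), (σ a).val = k ↔ a = ![v, x, y] k := fun a k ↦ by
    rw [← σ.apply_eq_iff_eq, hσ, Fin.ext_iff, Fin.val_castLE]
  have h0 : ∀ a, (σ a).val = 0 ↔ a = v := fun a ↦ by simpa using hval a 0
  have h1 : ∀ a, (σ a).val = 1 ↔ a = x := fun a ↦ by simpa using hval a 1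
  have h2 : ∀ a, (σ a).val = 2 ↔ a = y := fun a ↦ by simpa using hval a 2
  refine ⟨⟨σ, fun {a b} ↦ ?_⟩⟩
  rw [unicyclicStar, fromRel_adj, hadj, ne_eq, σ.apply_eq_iff_eq, h0, h0, h1, h1, h2, h2]
  tauto

theorem nonempty_iso_unicyclicStar_iff {n : ℕ} {G : SimpleGraph (Fin n)} [DecidableRel G.Adj]
    (hn : 3 ≤ n) (hE : #G.edgeFinset = n) :
    Nonempty (G ≃g unicyclicStar n) ↔ ∃ v, G.IsUniversal v := by
  refine ⟨fun ⟨e⟩ ↦ ⟨e.symm ⟨0, by omega⟩, fun w hw ↦ ?_⟩,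
    fun ⟨v, hv⟩ ↦ nonempty_iso_unicyclicStar_of_isUniversal hn hE hv⟩
  rw [← e.map_adj_iff, e.apply_symm_apply]
  simp only [unicyclicStar, fromRel_adj]
  exact ⟨fun h ↦ hw (e.symm_apply_eq.2 h), by simp⟩

end SimpleGraph

theorem stmt11 {n : ℕ} (hn : 4 ≤ n) (G : SimpleGraph (Fin n)) [DecidableRel G.Adj]
    (hG : IsUnicyclic G) :
    (4 ^ n ≤ ∏ u : Fin n, (G.degree u) ^ (G.degree u)) ∧
    (∏ u : Fin n, (G.degree u) ^ (G.degree u) ≤ 16 * (n - 1) ^ (n - 1)) ∧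
    ((∏ u : Fin n, (G.degree u) ^ (G.degree u) = 4 ^ n) ↔
      Nonempty (G ≃g SimpleGraph.cycleGraph n)) ∧
    ((∏ u : Fin n, (G.degree u) ^ (G.degree u) = 16 * (n - 1) ^ (n - 1)) ↔
      Nonempty (G ≃g unicyclicStar n)) := by
  obtain ⟨hc, hE⟩ := hG
  have : Nontrivial (Fin n) := Fin.nontrivial_iff_two_le.2 (by omega)
  have hpos : ∀ v, 0 < G.degree v := fun v ↦ hc.preconnected.degree_pos_of_nontrivial v
  have hB := G.excessDegreeBounds hpos (by simpa using hE)
  have hS : 3 ≤ #(univ : Finset (Fin n)) := by rw [card_fin]; omega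
  have hlow := four_pow_card_le_prod hB.sum_eq
  have hup := (hB.prod_le_and_exists_of_eq hS).1
  have hcyc := prod_eq_four_pow_card_iff hB.sum_eq
  have hstar := hB.prod_eq_iff hS
  simp only [card_univ, Fintype.card_fin, mem_univ, true_and, forall_const] at hlow hup hcyc hstar
  have hprod : ∏ u, G.degree u ^ G.degree u = ∏ u, (G.degree u - 1 + 1) ^ (G.degree u - 1 + 1) :=
    prod_congr rfl fun u _ ↦ by rw [Nat.sub_add_cancel (hpos u)]
  rw [hprod, hc.nonempty_iso_cycleGraph_iff (by omega),
    nonempty_iso_unicyclicStar_iff (by omega) hE]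
  refine ⟨hlow, hup, hcyc.trans (forall_congr' fun v ↦ ?_), hstar.trans (exists_congr fun v ↦ ?_)⟩
  · have := hpos v
    omega
  · rw [← degree_eq_card_sub_one, Fintype.card_fin]
    have := hpos v
    omega
end

section
/- If G is a unicyclic graph with n ≥ 4 vertices and maximum degree Δ ≥ 3, then M_1(G) ≥ Δ² + 4n - 3Δ + 2, F(G) ≥ Δ³ + 8n - 7Δ + 6, and ID(G) ≥ 1/Δ + (n+Δ-3)/2, with each equality holding if and only if G ∈ H_n^Δ. -/
open Finset SimpleGraph

/-!
A unicyclic graph on `n` vertices has degree sum `2n`. Fix a vertex of maximum degree `Δ`; the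
other `n - 1` degrees are at least `1` and sum to `2n - Δ`. Each of `k ↦ k²`, `k ↦ k³`,
`k ↦ 1/k` lies on or above the line through its values at `1` and `2`, strictly above it from `3`
on. Summing that line over the remaining degrees gives the bound, with equality exactly when all
of them are `1` or `2`; their number and sum then fix how many are of each kind.
-/

def secant12 (f : ℕ → ℝ) (k : ℕ) : ℝ :=
  f 1 + (f 2 - f 1) * ((k : ℝ) - 1)

/-- The degree sequence of the graphs in `H_n^Δ`. -/
def extremalDegreeSeq (n Δ : ℕ) : Multiset ℕ :=
  Δ ::ₘ (Multiset.replicate (n - Δ + 1) 2 + Multiset.replicate (Δ - 2) 1)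

section Secant

variable {f : ℕ → ℝ} (hf : ∀ k, 3 ≤ k → secant12 f k < f k)
include hf

theorem secant12_le {k : ℕ} (hk : 1 ≤ k) : secant12 f k ≤ f k := by
  obtain rfl | rfl | hk3 : k = 1 ∨ k = 2 ∨ 3 ≤ k := by omega
  · simp [secant12]
  · norm_num [secant12]
  · exact (hf k hk3).le

theorem eq_one_or_two_of_secant12_eq {k : ℕ} (hk : 1 ≤ k) (h : secant12 f k = f k) :
    k = 1 ∨ k = 2 := by
  by_contra! hne
  exact (hf k (by omega)).ne h

variable {ι : Type*} {s : Finset ι} {d : ι → ℕ} (hd : ∀ i ∈ s, 1 ≤ d i)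
include hd

theorem sum_secant12_le_sum : ∑ i ∈ s, secant12 f (d i) ≤ ∑ i ∈ s, f (d i) :=
  sum_le_sum fun i hi => secant12_le hf (hd i hi)

theorem eq_one_or_two_of_sum_eq_sum_secant12
    (h : ∑ i ∈ s, f (d i) = ∑ i ∈ s, secant12 f (d i)) : ∀ i ∈ s, d i = 1 ∨ d i = 2 :=
  fun i hi => eq_one_or_two_of_secant12_eq hf (hd i hi)
    (((sum_eq_sum_iff_of_le fun i hi => secant12_le hf (hd i hi)).mp h.symm) i hi)

end Secant

theorem sum_secant12 {ι : Type*} (f : ℕ → ℝ) (s : Finset ι) (d : ι → ℕ) :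
    ∑ i ∈ s, secant12 f (d i) = #s * f 1 + (f 2 - f 1) * ((∑ i ∈ s, d i : ℕ) - (#s : ℝ)) := by
  simp only [secant12, sum_add_distrib, ← mul_sum, sum_sub_distrib, sum_const, nsmul_eq_mul,
    mul_one, Nat.cast_sum]

theorem Multiset.eq_replicate_two_add_replicate_one {M : Multiset ℕ}
    (hM : ∀ x ∈ M, x = 1 ∨ x = 2) :
    M = replicate (M.sum - card M) 2 + replicate (2 * card M - M.sum) 1 := by
  have htwos : M.filter (· = 2) = replicate (card (M.filter (· = 2))) 2 :=
    eq_replicate_card.mpr fun x hx => (mem_filter.mp hx).2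
  have hones : M.filter (¬ · = 2) = replicate (card (M.filter (¬ · = 2))) 1 :=
    eq_replicate_card.mpr fun x hx => by
      obtain ⟨hxM, hx2⟩ := mem_filter.mp hx
      exact (hM x hxM).resolve_right hx2
  have hsplit := filter_add_not (· = 2) M
  rw [htwos, hones] at hsplit
  generalize card (M.filter (· = 2)) = p, card (M.filter (¬ · = 2)) = q at hsplit
  subst hsplit
  simp only [sum_add, sum_replicate, card_add, card_replicate, smul_eq_mul]
  congr 2 <;> omega

section DegreeSequence

variable {n Δ : ℕ}

theorem sum_map_extremalDegreeSeq (f : ℕ → ℝ) (hΔ2 : 2 ≤ Δ) (hΔn : Δ ≤ n) :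
    ((extremalDegreeSeq n Δ).map f).sum = f Δ + ((n : ℝ) + 1 - Δ) * f 2 + ((Δ : ℝ) - 2) * f 1 := by
  simp only [extremalDegreeSeq, Multiset.map_cons, Multiset.map_add, Multiset.map_replicate,
    Multiset.sum_cons, Multiset.sum_add, Multiset.sum_replicate, nsmul_eq_mul]
  push_cast [Nat.cast_sub hΔn, Nat.cast_sub hΔ2]
  ring

theorem map_eq_extremalDegreeSeq {d : Fin n → ℕ} (hsum : ∑ i, d i = 2 * n) {i₀ : Fin n}
    (hi₀ : d i₀ = Δ) (hΔn : Δ ≤ n) (h12 : ∀ i ∈ univ.erase i₀, d i = 1 ∨ d i = 2) :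
    univ.val.map d = extremalDegreeSeq n Δ := by
  rw [← Multiset.cons_erase (mem_val.mpr (mem_univ i₀)), Multiset.map_cons, hi₀, ← erase_val]
  set M := (univ.erase i₀).val.map d
  have hM := Multiset.eq_replicate_two_add_replicate_one (M := M) fun x hx => by
    obtain ⟨i, hi, rfl⟩ := Multiset.mem_map.mp hx
    exact h12 i hi
  have hcard : Multiset.card M = n - 1 := by simp [M]
  have hMsum : Δ + M.sum = 2 * n := by
    rw [← hsum, ← hi₀, ← add_sum_erase _ d (mem_univ i₀)]
    rfl
  rw [extremalDegreeSeq, hM, hcard]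
  have hn := i₀.pos
  congr 3 <;> omega

theorem le_sum_and_eq_iff_map_eq_extremalDegreeSeq {f : ℕ → ℝ}
    (hf : ∀ k, 3 ≤ k → secant12 f k < f k) {d : Fin n → ℕ} (hd : ∀ i, 1 ≤ d i)
    (hsum : ∑ i, d i = 2 * n) {i₀ : Fin n} (hi₀ : d i₀ = Δ) (hΔ2 : 2 ≤ Δ) (hΔn : Δ ≤ n) {T : ℝ}
    (hT : f Δ + ((n : ℝ) + 1 - Δ) * f 2 + ((Δ : ℝ) - 2) * f 1 = T) :
    T ≤ ∑ i, f (d i) ∧ (∑ i, f (d i) = T ↔ univ.val.map d = extremalDegreeSeq n Δ) := by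
  have hsplit : ∑ i, f (d i) = f Δ + ∑ i ∈ univ.erase i₀, f (d i) := by
    rw [← hi₀]
    exact (add_sum_erase _ (fun i => f (d i)) (mem_univ i₀)).symm
  have hline : ∑ i ∈ univ.erase i₀, secant12 f (d i) = T - f Δ := by
    have hrest : (Δ : ℝ) + (∑ i ∈ univ.erase i₀, d i : ℕ) = 2 * n := by
      rw [← hi₀]
      exact_mod_cast (add_sum_erase _ d (mem_univ i₀)).trans hsum
    rw [sum_secant12, card_erase_of_mem (mem_univ i₀), card_univ, Fintype.card_fin, ← hT,
      Nat.cast_sub i₀.pos]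
    linear_combination (f 2 - f 1) * hrest
  have hle := sum_secant12_le_sum hf (s := univ.erase i₀) fun i _ => hd i
  refine ⟨by linarith, fun heq => ?_, fun hseq => ?_⟩
  · exact map_eq_extremalDegreeSeq hsum hi₀ hΔn
      (eq_one_or_two_of_sum_eq_sum_secant12 hf (fun i _ => hd i) (by linarith))
  · rw [← hT, ← sum_map_extremalDegreeSeq f hΔ2 hΔn, ← hseq, Multiset.map_map]
    rfl

end DegreeSequence

theorem secant12_sq_lt {k : ℕ} (hk : 3 ≤ k) :
    secant12 (fun k => (k : ℝ) ^ 2) k < (k : ℝ) ^ 2 := by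
  have hk' : (3 : ℝ) ≤ k := by exact_mod_cast hk
  norm_num [secant12]
  nlinarith

theorem secant12_pow_three_lt {k : ℕ} (hk : 3 ≤ k) :
    secant12 (fun k => (k : ℝ) ^ 3) k < (k : ℝ) ^ 3 := by
  have hk' : (3 : ℝ) ≤ k := by exact_mod_cast hk
  norm_num [secant12]
  nlinarith [mul_pos (mul_pos (by linarith : (0 : ℝ) < k - 1) (by linarith : (0 : ℝ) < k - 2))
    (by linarith : (0 : ℝ) < k + 3)]

theorem secant12_one_div_lt {k : ℕ} (hk : 3 ≤ k) :
    secant12 (fun k => 1 / (k : ℝ)) k < 1 / (k : ℝ) := by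
  have hk' : (3 : ℝ) ≤ k := by exact_mod_cast hk
  have hpos : (0 : ℝ) < (k : ℝ)⁻¹ := by positivity
  norm_num [secant12]
  linarith

theorem IsUnicyclic.sum_degrees_eq {n : ℕ} {G : SimpleGraph (Fin n)} [DecidableRel G.Adj]
    (hG : IsUnicyclic G) : ∑ v, G.degree v = 2 * n := by
  rw [G.sum_degrees_eq_twice_card_edges, hG.2]

theorem IsUnicyclic.le_sum_and_eq_iff_map_eq_extremalDegreeSeq {n Δ : ℕ}
    {G : SimpleGraph (Fin n)} [DecidableRel G.Adj] (hG : IsUnicyclic G) (hΔ : G.maxDegree = Δ)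
    (hΔ2 : 2 ≤ Δ) {f : ℕ → ℝ} (hf : ∀ k, 3 ≤ k → secant12 f k < f k) {T : ℝ}
    (hT : f Δ + ((n : ℝ) + 1 - Δ) * f 2 + ((Δ : ℝ) - 2) * f 1 = T) :
    T ≤ ∑ v, f (G.degree v) ∧
      (∑ v, f (G.degree v) = T ↔ univ.val.map (fun v => G.degree v) = extremalDegreeSeq n Δ) := by
  have : Nontrivial (Fin n) := by
    by_contra h
    rw [not_nontrivial_iff_subsingleton] at h
    simp only [maxDegree_of_subsingleton] at hΔ
    omega
  obtain ⟨v₀, hv₀⟩ := G.exists_maximal_degree_vertex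
  have hΔn : Δ < n := by simpa [hΔ] using G.maxDegree_lt_card_verts
  exact _root_.le_sum_and_eq_iff_map_eq_extremalDegreeSeq hf
    (fun v => hG.1.preconnected.degree_pos_of_nontrivial v) hG.sum_degrees_eq (hv₀ ▸ hΔ) hΔ2
    hΔn.le hT

theorem stmt17_general {n Δ : ℕ} (G : SimpleGraph (Fin n)) [DecidableRel G.Adj]
    (hG : IsUnicyclic G) (hΔ : G.maxDegree = Δ) (hΔ3 : 3 ≤ Δ) :
    ((Δ : ℝ) ^ 2 + 4 * n - 3 * Δ + 2 ≤ ∑ u : Fin n, (G.degree u : ℝ) ^ 2 ∧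
      ((∑ u : Fin n, (G.degree u : ℝ) ^ 2 = (Δ : ℝ) ^ 2 + 4 * n - 3 * Δ + 2) ↔
        Finset.univ.val.map (fun u : Fin n => G.degree u) =
          Δ ::ₘ (Multiset.replicate (n - Δ + 1) 2 + Multiset.replicate (Δ - 2) 1))) ∧
    ((Δ : ℝ) ^ 3 + 8 * n - 7 * Δ + 6 ≤ ∑ u : Fin n, (G.degree u : ℝ) ^ 3 ∧
      ((∑ u : Fin n, (G.degree u : ℝ) ^ 3 = (Δ : ℝ) ^ 3 + 8 * n - 7 * Δ + 6) ↔
        Finset.univ.val.map (fun u : Fin n => G.degree u) =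
          Δ ::ₘ (Multiset.replicate (n - Δ + 1) 2 + Multiset.replicate (Δ - 2) 1))) ∧
    (1 / (Δ : ℝ) + ((n : ℝ) + Δ - 3) / 2 ≤ ∑ u : Fin n, (1 : ℝ) / (G.degree u) ∧
      ((∑ u : Fin n, (1 : ℝ) / (G.degree u) = 1 / (Δ : ℝ) + ((n : ℝ) + Δ - 3) / 2) ↔
        Finset.univ.val.map (fun u : Fin n => G.degree u) =
          Δ ::ₘ (Multiset.replicate (n - Δ + 1) 2 + Multiset.replicate (Δ - 2) 1))) := by
  have hΔ2 : 2 ≤ Δ := by omega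
  refine ⟨
    hG.le_sum_and_eq_iff_map_eq_extremalDegreeSeq hΔ hΔ2 (fun _ => secant12_sq_lt) ?_,
    hG.le_sum_and_eq_iff_map_eq_extremalDegreeSeq hΔ hΔ2 (fun _ => secant12_pow_three_lt) ?_,
    hG.le_sum_and_eq_iff_map_eq_extremalDegreeSeq hΔ hΔ2 (fun _ => secant12_one_div_lt) ?_⟩
  all_goals
    norm_num
    ring

theorem stmt17 {n Δ : ℕ} (hn : 4 ≤ n) (G : SimpleGraph (Fin n)) [DecidableRel G.Adj]
    (hG : IsUnicyclic G) (hΔ : G.maxDegree = Δ) (hΔ3 : 3 ≤ Δ) :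
    ((Δ : ℝ) ^ 2 + 4 * n - 3 * Δ + 2 ≤ ∑ u : Fin n, (G.degree u : ℝ) ^ 2 ∧
      ((∑ u : Fin n, (G.degree u : ℝ) ^ 2 = (Δ : ℝ) ^ 2 + 4 * n - 3 * Δ + 2) ↔
        Finset.univ.val.map (fun u : Fin n => G.degree u) =
          Δ ::ₘ (Multiset.replicate (n - Δ + 1) 2 + Multiset.replicate (Δ - 2) 1))) ∧
    ((Δ : ℝ) ^ 3 + 8 * n - 7 * Δ + 6 ≤ ∑ u : Fin n, (G.degree u : ℝ) ^ 3 ∧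
      ((∑ u : Fin n, (G.degree u : ℝ) ^ 3 = (Δ : ℝ) ^ 3 + 8 * n - 7 * Δ + 6) ↔
        Finset.univ.val.map (fun u : Fin n => G.degree u) =
          Δ ::ₘ (Multiset.replicate (n - Δ + 1) 2 + Multiset.replicate (Δ - 2) 1))) ∧
    (1 / (Δ : ℝ) + ((n : ℝ) + Δ - 3) / 2 ≤ ∑ u : Fin n, (1 : ℝ) / (G.degree u) ∧
      ((∑ u : Fin n, (1 : ℝ) / (G.degree u) = 1 / (Δ : ℝ) + ((n : ℝ) + Δ - 3) / 2) ↔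
        Finset.univ.val.map (fun u : Fin n => G.degree u) =
          Δ ::ₘ (Multiset.replicate (n - Δ + 1) 2 + Multiset.replicate (Δ - 2) 1))) :=
  stmt17_general G hG hΔ hΔ3
end
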